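/- arXiv:1610.08750 — 11 statements merged into one kernel-verified Lean document; each statement's English description precedes it below -/
import Mathlib

section
/- For all θ with |θ| < π/2 and all μ with 0 ≤ μ ≤ 1, one has cos(μθ) ≥ (cos θ)^μ. -/
/-! The two sides are separated by the chord value `1 + μ (cos θ - 1)`: `cos (μθ)` lies above it
by concavity of `cos` on `[-π/2, π/2]`, and `(cos θ)^μ = (1 + (cos θ - 1))^μ` lies below it by
Bernoulli's inequality for exponents in `[0, 1]`. -/

open Real

lemma Real.one_add_mul_cos_sub_one_le_cos_mul {θ μ : ℝ} (hθ : |θ| ≤ π / 2) (hμ0 : 0 ≤ μ)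
    (hμ1 : μ ≤ 1) : 1 + μ * (cos θ - 1) ≤ cos (μ * θ) := by
  have hθmem : θ ∈ Set.Icc (-(π / 2)) (π / 2) := abs_le.mp hθ
  have h0mem : (0 : ℝ) ∈ Set.Icc (-(π / 2)) (π / 2) := ⟨by linarith [pi_pos], by linarith [pi_pos]⟩
  have hchord := strictConcaveOn_cos_Icc.concaveOn.2 hθmem h0mem hμ0 (sub_nonneg.mpr hμ1)
    (add_sub_cancel μ 1)
  simp only [smul_eq_mul, mul_zero, add_zero, cos_zero, mul_one] at hchord
  linarith

lemma Real.rpow_le_one_add_mul_sub_one {x μ : ℝ} (hx : 0 ≤ x) (hμ0 : 0 ≤ μ) (hμ1 : μ ≤ 1) :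
    x ^ μ ≤ 1 + μ * (x - 1) := by
  simpa using rpow_one_add_le_one_add_mul_self (s := x - 1) (by linarith) hμ0 hμ1

theorem stmt_0 (θ μ : ℝ) (hθ : |θ| < π / 2) (hμ0 : 0 ≤ μ) (hμ1 : μ ≤ 1) :
    Real.cos (μ * θ) ≥ (Real.cos θ) ^ μ :=
  (rpow_le_one_add_mul_sub_one (cos_nonneg_of_mem_Icc (abs_le.mp hθ.le)) hμ0 hμ1).trans
    (one_add_mul_cos_sub_one_le_cos_mul hθ.le hμ0 hμ1)
end

section
/- If z is a complex number with Re(z) > 0 and 0 < μ ≤ 1, then Re(z^μ) ≥ (Re z)^μ, where z^μ is the principal branch of the power. -/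
open Real Set

theorem stmt_2 (z : ℂ) (hz : 0 < z.re) (μ : ℝ) (hμ0 : 0 < μ) (hμ1 : μ ≤ 1) :
    (z ^ (μ : ℂ)).re ≥ z.re ^ μ := by
  have hz0 : z ≠ 0 := fun h => by simp [h] at hz
  have habs : 0 < ‖z‖ := norm_pos_iff.mpr hz0
  set θ := Complex.arg z with hθ
  have hθlt := abs_lt.mp (Complex.abs_arg_lt_pi_div_two_iff.mpr (Or.inl hz))
  have hθmem : θ ∈ Icc (-(π/2)) (π/2) := ⟨hθlt.1.le, hθlt.2.le⟩
  have h0mem : (0:ℝ) ∈ Icc (-(π/2)) (π/2) := by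
    constructor <;> nlinarith [pi_pos]
  have hcos : 0 < Real.cos θ := Real.cos_pos_of_mem_Ioo ⟨hθlt.1, hθlt.2⟩
  have hcos1 : Real.cos θ ≤ 1 := Real.cos_le_one θ
  have hre : z.re = ‖z‖ * Real.cos θ := by
    rw [hθ, Complex.cos_arg hz0]; field_simp
  -- key inequality: cos θ ^ μ ≤ cos (θ * μ)
  have key : Real.cos θ ^ μ ≤ Real.cos (θ * μ) := by
    have h1 : Real.cos θ ^ μ * 1 ^ (1 - μ) ≤ μ * Real.cos θ + (1 - μ) * 1 :=
      Real.geom_mean_le_arith_mean2_weighted hμ0.le (by linarith) hcos.le zero_le_one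
        (by ring)
    have h2 : μ * Real.cos θ + (1 - μ) * Real.cos 0 ≤ Real.cos (μ * θ + (1 - μ) * 0) :=
      strictConcaveOn_cos_Icc.concaveOn.2 hθmem h0mem hμ0.le (by linarith) (by ring)
    simp only [Real.cos_zero, mul_zero, add_zero, Real.one_rpow] at h1 h2
    calc Real.cos θ ^ μ ≤ μ * Real.cos θ + (1 - μ) * 1 := by simpa using h1
      _ ≤ Real.cos (μ * θ) := by simpa using h2
      _ = Real.cos (θ * μ) := by rw [mul_comm]
  rw [Complex.cpow_ofReal_re, hre, Real.mul_rpow habs.le hcos.le]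
  have h := mul_le_mul_of_nonneg_left key (Real.rpow_nonneg habs.le μ)
  linarith
end

section
/- Let β ≥ 0 and 0 < μ ≤ 1. For every complex λ with Re(λ) > 0, one has Re((λ + β)^μ) > β^μ, i.e. Re((λ+β)^μ - β^μ) > 0. -/
/-!
Write `z = λ + β`, so `Re z > β ≥ 0` and `|arg z| < π/2`. Since `Re (z ^ μ) = ‖z‖ ^ μ cos (μ arg z)`
and `Re z = ‖z‖ cos (arg z)`, it suffices that `cos θ ^ μ ≤ cos (μ θ)` for `|θ| ≤ π/2`, `μ ∈ [0, 1]`.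
This follows by squeezing `μ cos θ + (1 - μ)` between the two sides: Bernoulli's inequality bounds
it from below by `cos θ ^ μ`, and concavity of `cos` on `[-π/2, π/2]` (applied at `θ` and `0`)
from above by `cos (μ θ)`.
-/

open Real Set

theorem Real.cos_rpow_le_cos_mul {θ μ : ℝ} (hθ : |θ| ≤ π / 2) (hμ0 : 0 ≤ μ) (hμ1 : μ ≤ 1) :
    cos θ ^ μ ≤ cos (μ * θ) := by
  have hθ_mem : θ ∈ Icc (-(π / 2)) (π / 2) := abs_le.mp hθ
  have hzero_mem : (0 : ℝ) ∈ Icc (-(π / 2)) (π / 2) := by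
    constructor <;> linarith [pi_pos]
  have hcos_nonneg : 0 ≤ cos θ := cos_nonneg_of_mem_Icc hθ_mem
  have bernoulli : cos θ ^ μ ≤ 1 + μ * (cos θ - 1) := by
    simpa using rpow_one_add_le_one_add_mul_self (s := cos θ - 1) (by linarith) hμ0 hμ1
  have concavity : μ * cos θ + (1 - μ) * cos 0 ≤ cos (μ * θ + (1 - μ) * 0) :=
    strictConcaveOn_cos_Icc.concaveOn.2 hθ_mem hzero_mem hμ0 (by linarith) (by ring)
  simp only [cos_zero, mul_zero, add_zero, mul_one] at concavity
  linarith

theorem Complex.re_rpow_le_re_cpow {z : ℂ} (hz : 0 ≤ z.re) {μ : ℝ} (hμ0 : 0 ≤ μ) (hμ1 : μ ≤ 1) :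
    z.re ^ μ ≤ (z ^ (μ : ℂ)).re := by
  rcases eq_or_ne z 0 with rfl | hz0
  · rcases eq_or_lt_of_le hμ0 with rfl | hμ
    · simp
    · simp [zero_rpow hμ.ne', Complex.zero_cpow (Complex.ofReal_ne_zero.mpr hμ.ne')]
  have hnorm : 0 < ‖z‖ := norm_pos_iff.mpr hz0
  have hcos_arg : Real.cos z.arg = z.re / ‖z‖ := Complex.cos_arg hz0
  calc z.re ^ μ = ‖z‖ ^ μ * Real.cos z.arg ^ μ := by
        rw [hcos_arg, ← mul_rpow (norm_nonneg z) (div_nonneg hz hnorm.le),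
          mul_div_cancel₀ _ hnorm.ne']
    _ ≤ ‖z‖ ^ μ * Real.cos (μ * z.arg) :=
        mul_le_mul_of_nonneg_left
          (cos_rpow_le_cos_mul (Complex.abs_arg_le_pi_div_two_iff.mpr hz) hμ0 hμ1)
          (rpow_nonneg (norm_nonneg z) μ)
    _ = (z ^ (μ : ℂ)).re := by rw [Complex.cpow_ofReal_re, mul_comm μ]

theorem stmt_3 (β μ : ℝ) (hβ : 0 ≤ β) (hμ0 : 0 < μ) (hμ1 : μ ≤ 1)
    (lam : ℂ) (hlam : 0 < lam.re) :
    ((lam + (β : ℂ)) ^ (μ : ℂ)).re > β ^ μ := by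
  have hre : (lam + (β : ℂ)).re = lam.re + β := by simp
  calc β ^ μ < (lam + (β : ℂ)).re ^ μ := rpow_lt_rpow hβ (by linarith) hμ0
    _ ≤ ((lam + (β : ℂ)) ^ (μ : ℂ)).re :=
        Complex.re_rpow_le_re_cpow (by linarith) hμ0.le hμ1
end

section
/- Let α < 0 be real with α + β^μ ≥ |α|, where β ≥ 0 and 0 < μ ≤ 1. Define g(λ) = (λ+β)^μ / ((λ+β)^μ + α) for complex λ with Re(λ) > 0. Then |g(λ)| ≤ β^μ/(α + β^μ) ≤ β^μ/|α| for all such λ. -/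
theorem stmt_5 (α β μ : ℝ) (hα : α < 0) (hβ : 0 ≤ β) (hμ0 : 0 < μ) (hμ1 : μ ≤ 1)
    (hαβ : α + β ^ μ ≥ |α|) (lam : ℂ) (hlam : 0 < lam.re) :
    ‖(lam + (β : ℂ)) ^ (μ : ℂ) / ((lam + (β : ℂ)) ^ (μ : ℂ) + (α : ℂ))‖
      ≤ β ^ μ / (α + β ^ μ) ∧
    β ^ μ / (α + β ^ μ) ≤ β ^ μ / |α| := by
  have habs : |α| = -α := abs_of_neg hα
  rw [habs] at hαβ
  have hb : 0 < α + β ^ μ := by linarith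
  have hbnn : (0:ℝ) ≤ β ^ μ := Real.rpow_nonneg hβ μ
  constructor
  · set z : ℂ := lam + (β : ℂ) with hz
    have hzre : 0 < z.re := by
      simp only [hz, Complex.add_re, Complex.ofReal_re]
      linarith
    have hzne : z ≠ 0 := by
      intro h
      rw [h] at hzre
      simp at hzre
    have hr : ‖z ^ (μ : ℂ)‖ = ‖z‖ ^ μ := by
      exact Complex.norm_cpow_real z μ
    have habsz : β ≤ ‖z‖ := by
      calc β ≤ z.re := by
              simp only [hz, Complex.add_re, Complex.ofReal_re]; linarith
        _ ≤ ‖z‖ := Complex.re_le_norm z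
    have hrge : β ^ μ ≤ ‖z‖ ^ μ := Real.rpow_le_rpow hβ habsz hμ0.le
    set r := ‖z‖ ^ μ with hrdef
    have hra : 0 < r + α := by linarith
    have key : r ≤ ‖z ^ (μ : ℂ) + (α : ℂ)‖ + (-α) := by
      have h1 : ‖z ^ (μ : ℂ)‖
          ≤ ‖z ^ (μ : ℂ) + (α : ℂ)‖ + ‖-(α:ℂ)‖ := by
        calc ‖z ^ (μ : ℂ)‖
            = ‖(z ^ (μ : ℂ) + (α:ℂ)) + (-(α:ℂ))‖ := by ring_nf
          _ ≤ _ := norm_add_le _ _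
      have h2 : ‖-(α:ℂ)‖ = -α := by
        rw [norm_neg, Complex.norm_real, Real.norm_eq_abs, habs]
      rw [h2] at h1
      rwa [hr] at h1
    have hden : r + α ≤ ‖z ^ (μ : ℂ) + (α : ℂ)‖ := by linarith
    rw [norm_div, hr]
    calc r / ‖z ^ (μ : ℂ) + (α : ℂ)‖
        ≤ r / (r + α) := by
          apply div_le_div_of_nonneg_left (by linarith) hra hden
      _ ≤ β ^ μ / (α + β ^ μ) := by
          rw [div_le_div_iff₀ hra hb]
          nlinarith
  · rw [habs]
    exact div_le_div_of_nonneg_left hbnn (by linarith) hαβ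
end

section
/- Let β ≥ 0, 0 < μ ≤ 1 and α < 0 with α + β^μ ≥ |α|. Then for every complex λ with Re(λ) > 0, |(λ+β)^μ + α| > α + β^μ. -/
/-! For `Re λ > 0` we have `β < Re (λ + β) ≤ |λ + β|`, so `|(λ + β)^μ| = |λ + β|^μ > β^μ`; the
reverse triangle inequality with `|α| = -α` then gives `|(λ + β)^μ + α| ≥ |λ + β|^μ + α > β^μ + α`. -/

theorem Complex.rpow_lt_norm_cpow_of_lt_re {β μ : ℝ} (hβ : 0 ≤ β) (hμ : 0 < μ) {w : ℂ}
    (hw : β < w.re) : β ^ μ < ‖w ^ (μ : ℂ)‖ := by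
  rw [Complex.norm_cpow_real]
  exact Real.rpow_lt_rpow hβ (hw.trans_le (Complex.re_le_norm w)) hμ

theorem stmt_6_general (α β μ : ℝ) (hα : α < 0) (hβ : 0 ≤ β) (hμ0 : 0 < μ)
    (lam : ℂ) (hlam : 0 < lam.re) :
    ‖(lam + (β : ℂ)) ^ (μ : ℂ) + (α : ℂ)‖ > α + β ^ μ := by
  have hre : β < (lam + β).re := by
    rw [Complex.add_re, Complex.ofReal_re]
    linarith
  have hnorm_α : ‖(α : ℂ)‖ = -α := by
    rw [Complex.norm_real, Real.norm_of_nonpos hα.le]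
  calc α + β ^ μ < ‖(lam + β) ^ (μ : ℂ)‖ - ‖(α : ℂ)‖ := by
        linarith [Complex.rpow_lt_norm_cpow_of_lt_re hβ hμ0 hre]
    _ ≤ ‖(lam + β) ^ (μ : ℂ) + α‖ := norm_sub_le_norm_add _ _

theorem stmt_6 (α β μ : ℝ) (hα : α < 0) (hβ : 0 ≤ β) (hμ0 : 0 < μ) (hμ1 : μ ≤ 1)
    (hαβ : α + β ^ μ ≥ |α|) (lam : ℂ) (hlam : 0 < lam.re) :
    ‖(lam + (β : ℂ)) ^ (μ : ℂ) + (α : ℂ)‖ > α + β ^ μ :=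
  stmt_6_general α β μ hα hβ hμ0 lam hlam
end

section
/- Let α > 0, β ≥ 0, 0 < μ ≤ 1, and h(λ) = λ(λ+β)^μ/((λ+β)^μ + α) for Re(λ) > 0. Then for every λ with Re(λ) > 0, |λ h'(λ)/h(λ)| ≤ 1 + μ. -/
-- auxiliary: Re(z^μ) > 0 for Re z > 0, 0<μ≤1
lemma re_cpow_pos' (z : ℂ) (hz : 0 < z.re) (μ : ℝ) (hμ0 : 0 < μ) (hμ1 : μ ≤ 1) :
    0 < (z ^ (μ:ℂ)).re := by
  have hz0 : z ≠ 0 := by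
    intro h; rw [h] at hz; simp at hz
  rw [Complex.cpow_def_of_ne_zero hz0, Complex.exp_re]
  have harg : |Complex.arg z| < Real.pi / 2 :=
    Complex.abs_arg_lt_pi_div_two_iff.2 (Or.inl hz)
  have him : (Complex.log z * (μ:ℂ)).im = Complex.arg z * μ := by
    simp [Complex.mul_im, Complex.log_im]
  rw [him]
  have hcos : 0 < Real.cos (Complex.arg z * μ) := by
    apply Real.cos_pos_of_mem_Ioo
    constructor
    · have : |Complex.arg z * μ| < Real.pi / 2 := by
        rw [abs_mul, abs_of_pos hμ0]
        calc |Complex.arg z| * μ ≤ |Complex.arg z| * 1 := by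
              exact mul_le_mul_of_nonneg_left hμ1 (abs_nonneg _)
          _ = |Complex.arg z| := mul_one _
          _ < Real.pi / 2 := harg
      linarith [neg_abs_le (Complex.arg z * μ), le_abs_self (Complex.arg z * μ)]
    · have : |Complex.arg z * μ| < Real.pi / 2 := by
        rw [abs_mul, abs_of_pos hμ0]
        calc |Complex.arg z| * μ ≤ |Complex.arg z| * 1 := by
              exact mul_le_mul_of_nonneg_left hμ1 (abs_nonneg _)
          _ = |Complex.arg z| := mul_one _
          _ < Real.pi / 2 := harg
      linarith [le_abs_self (Complex.arg z * μ)]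
  positivity

theorem stmt_7 (α β μ : ℝ) (hα : 0 < α) (hβ : 0 ≤ β) (hμ0 : 0 < μ) (hμ1 : μ ≤ 1)
    (h : ℂ → ℂ)
    (hdef : ∀ lam : ℂ, h lam = lam * (lam + (β : ℂ)) ^ (μ : ℂ) / ((lam + (β : ℂ)) ^ (μ : ℂ) + (α : ℂ)))
    (lam : ℂ) (hlam : 0 < lam.re) :
    ‖lam * deriv h lam / h lam‖ ≤ 1 + μ := by
  set a : ℂ := lam + (β:ℂ) with ha
  have hare : 0 < a.re := by
    simp only [ha, Complex.add_re, Complex.ofReal_re]; linarith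
  have ha0 : a ≠ 0 := by intro h0; rw [h0] at hare; simp at hare
  have hlam0 : lam ≠ 0 := by intro h0; rw [h0] at hlam; simp at hlam
  set w : ℂ := a ^ (μ:ℂ) with hw
  have hwre : 0 < w.re := re_cpow_pos' a hare μ hμ0 hμ1
  have hw0 : w ≠ 0 := by intro h0; rw [h0] at hwre; simp at hwre
  have hden : w + (α:ℂ) ≠ 0 := by
    intro h0
    have : (w + (α:ℂ)).re = 0 := by rw [h0]; simp
    simp only [Complex.add_re, Complex.ofReal_re] at this
    linarith
  set u : ℂ := a ^ ((μ:ℂ) - 1) with hu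
  have hwu : u * a = w := by
    rw [hu, hw]
    calc a ^ ((μ:ℂ) - 1) * a = a ^ ((μ:ℂ) - 1) * a ^ (1:ℂ) := by rw [Complex.cpow_one]
      _ = a ^ ((μ:ℂ) - 1 + 1) := (Complex.cpow_add _ _ ha0).symm
      _ = a ^ (μ:ℂ) := by ring_nf
  have hu0 : u ≠ 0 := by
    intro h0
    apply hw0
    rw [← hwu, h0, zero_mul]
  have hden2 : u * a + (α:ℂ) ≠ 0 := by rw [hwu]; exact hden
  -- derivative
  have hd1 : HasDerivAt (fun z : ℂ => z + (β:ℂ)) 1 lam := (hasDerivAt_id lam).add_const _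
  have hd2 : HasDerivAt (fun z : ℂ => (z + (β:ℂ)) ^ (μ:ℂ)) ((μ:ℂ) * u * 1) lam :=
    hd1.cpow_const (Or.inl hare)
  have hd3 : HasDerivAt (fun z : ℂ => z * (z + (β:ℂ)) ^ (μ:ℂ))
      (1 * w + lam * ((μ:ℂ) * u * 1)) lam :=
    (hasDerivAt_id lam).mul hd2
  have hd4 : HasDerivAt (fun z : ℂ => (z + (β:ℂ)) ^ (μ:ℂ) + (α:ℂ))
      ((μ:ℂ) * u * 1) lam := hd2.add_const _
  have hd5 : HasDerivAt h
      (((1 * w + lam * ((μ:ℂ) * u * 1)) * (w + α) - lam * w * ((μ:ℂ) * u * 1)) / (w + α) ^ 2)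
      lam := by
    have : h = fun z : ℂ => z * (z + (β:ℂ)) ^ (μ:ℂ) / ((z + (β:ℂ)) ^ (μ:ℂ) + (α:ℂ)) :=
      funext hdef
    rw [this]
    exact hd3.div hd4 hden
  have hderiv := hd5.deriv
  rw [hderiv, hdef lam, ← ha, ← hw, ← hwu]
  have hkey : lam * ((((1 * (u * a) + lam * ((μ:ℂ) * u * 1)) * (u * a + α) - lam * (u * a) * ((μ:ℂ) * u * 1)) / (u * a + α) ^ 2)) / (lam * (u * a) / (u * a + α))
      = 1 + ((α:ℂ) * μ * lam) / ((u * a + α) * a) := by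
    field_simp
    ring
  rw [hkey]
  have h1 : α ≤ ‖u * a + α‖ := by
    rw [hwu]
    calc α = (w + (α:ℂ)).re - w.re := by simp
      _ ≤ (w + (α:ℂ)).re := by linarith
      _ ≤ ‖w + α‖ := Complex.re_le_norm _
  have h2 : ‖lam‖ ≤ ‖a‖ := by
    have hsq : ‖lam‖ ^ 2 ≤ ‖a‖ ^ 2 := by
      rw [← Complex.normSq_eq_norm_sq, ← Complex.normSq_eq_norm_sq]
      simp only [ha, Complex.normSq_apply, Complex.add_re, Complex.add_im,
        Complex.ofReal_re, Complex.ofReal_im, add_zero]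
      nlinarith
    nlinarith [norm_nonneg lam, norm_nonneg a]
  have habs : ‖((α:ℂ) * μ * lam) / ((u * a + α) * a)‖ ≤ μ := by
    rw [norm_div, norm_mul, norm_mul, norm_mul]
    rw [Complex.norm_real, Complex.norm_real, Real.norm_eq_abs, Real.norm_eq_abs, abs_of_pos hα, abs_of_pos hμ0]
    have ha' : 0 < ‖a‖ := by
      simpa using norm_pos_iff.2 ha0
    have hwa' : 0 < ‖u * a + α‖ := lt_of_lt_of_le hα h1
    rw [div_le_iff₀ (mul_pos hwa' ha')]
    have hmm : α * ‖lam‖ ≤ ‖u * a + α‖ * ‖a‖ :=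
      mul_le_mul h1 h2 (norm_nonneg lam) (le_trans hα.le h1)
    nlinarith [norm_nonneg lam]
  calc ‖1 + ((α:ℂ) * μ * lam) / ((u * a + α) * a)‖
      ≤ ‖1‖ + ‖((α:ℂ) * μ * lam) / ((u * a + α) * a)‖ :=
        norm_add_le _ _
    _ ≤ 1 + μ := by rw [norm_one]; linarith
end

section
/- Let α < 0 with α + β^μ ≥ |α|, β ≥ 0, 0 < μ ≤ 1, and h(λ) = λ(λ+β)^μ/((λ+β)^μ + α). Then for every λ with Re(λ) > 0, |λ h'(λ)/h(λ)| ≤ 1 + μ|α|/(α + β^μ) ≤ 1 + μ. -/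
theorem stmt_8 (α β μ : ℝ) (hα : α < 0) (hβ : 0 ≤ β) (hμ0 : 0 < μ) (hμ1 : μ ≤ 1)
    (hαβ : α + β ^ μ ≥ |α|)
    (h : ℂ → ℂ)
    (hdef : ∀ lam : ℂ, h lam = lam * (lam + (β : ℂ)) ^ (μ : ℂ) / ((lam + (β : ℂ)) ^ (μ : ℂ) + (α : ℂ)))
    (lam : ℂ) (hlam : 0 < lam.re) :
    ‖lam * deriv h lam / h lam‖ ≤ 1 + μ * |α| / (α + β ^ μ) ∧
    1 + μ * |α| / (α + β ^ μ) ≤ 1 + μ := by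
  have hfun : h = fun x : ℂ => x * (x + (β : ℂ)) ^ (μ : ℂ) / ((x + (β : ℂ)) ^ (μ : ℂ) + (α : ℂ)) :=
    funext hdef
  subst hfun
  set w : ℂ := lam + (β : ℂ) with hwdef
  have hwre : 0 < w.re := by
    simp only [hwdef, Complex.add_re, Complex.ofReal_re]; linarith
  have hwne : w ≠ 0 := by
    intro h0; rw [h0] at hwre; simp at hwre
  have hlamne : lam ≠ 0 := by
    intro h0; rw [h0] at hlam; simp at hlam
  have hαabs : |α| = -α := abs_of_neg hα
  have hαpos : 0 < α + β ^ μ := lt_of_lt_of_le (abs_pos.2 (ne_of_lt hα)) hαβ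
  have hβw : β ≤ ‖w‖ := by
    have h1 : w.re ≤ ‖w‖ := Complex.re_le_norm w
    have h2 : β ≤ w.re := by
      simp only [hwdef, Complex.add_re, Complex.ofReal_re]; linarith
    linarith
  have hAabs : ‖w ^ (μ : ℂ)‖ = ‖w‖ ^ μ := Complex.norm_cpow_real w μ
  have hden : α + β ^ μ ≤ ‖w ^ (μ : ℂ) + (α : ℂ)‖ := by
    have h1 : ‖w ^ (μ : ℂ)‖ - ‖-(α : ℂ)‖ ≤ ‖w ^ (μ : ℂ) - -(α : ℂ)‖ :=
      norm_sub_norm_le _ _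
    have h2 : ‖-(α : ℂ)‖ = -α := by
      rw [norm_neg, Complex.norm_real, Real.norm_eq_abs, hαabs]
    have h3 : β ^ μ ≤ ‖w‖ ^ μ := Real.rpow_le_rpow hβ hβw hμ0.le
    rw [h2] at h1
    simp only [sub_neg_eq_add] at h1
    rw [hAabs] at h1
    linarith
  have hdenne : w ^ (μ : ℂ) + (α : ℂ) ≠ 0 := by
    intro h0
    rw [h0] at hden
    simp at hden; linarith
  have hAne : w ^ (μ : ℂ) ≠ 0 := by
    intro h0
    rw [h0, norm_zero] at hAabs
    have := Real.rpow_pos_of_pos (norm_pos_iff.mpr hwne) μ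
    linarith
  -- derivative
  have hd1 : HasDerivAt (fun x : ℂ => x + (β : ℂ)) 1 lam := (hasDerivAt_id lam).add_const _
  have hd2 : HasDerivAt (fun x : ℂ => (x + (β : ℂ)) ^ (μ : ℂ))
      ((μ : ℂ) * w ^ ((μ : ℂ) - 1) * 1) lam := hd1.cpow_const (Or.inl hwre)
  have hd3 : HasDerivAt (fun x : ℂ => x * (x + (β : ℂ)) ^ (μ : ℂ))
      (1 * w ^ (μ : ℂ) + lam * ((μ : ℂ) * w ^ ((μ : ℂ) - 1) * 1)) lam :=
    (hasDerivAt_id lam).mul hd2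
  have hd4 : HasDerivAt (fun x : ℂ => (x + (β : ℂ)) ^ (μ : ℂ) + (α : ℂ))
      ((μ : ℂ) * w ^ ((μ : ℂ) - 1) * 1) lam := hd2.add_const _
  have hd : HasDerivAt (fun x : ℂ => x * (x + (β : ℂ)) ^ (μ : ℂ) / ((x + (β : ℂ)) ^ (μ : ℂ) + (α : ℂ)))
      (((1 * w ^ (μ : ℂ) + lam * ((μ : ℂ) * w ^ ((μ : ℂ) - 1) * 1)) * (w ^ (μ : ℂ) + (α : ℂ)) -
        lam * w ^ (μ : ℂ) * ((μ : ℂ) * w ^ ((μ : ℂ) - 1) * 1)) / (w ^ (μ : ℂ) + (α : ℂ)) ^ 2) lam :=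
    hd3.div hd4 hdenne
  have hderiv := hd.deriv
  have hsub : w ^ ((μ : ℂ) - 1) = w ^ (μ : ℂ) / w := by
    rw [Complex.cpow_sub _ _ hwne, Complex.cpow_one]
  have hkey : lam * deriv (fun x : ℂ => x * (x + (β : ℂ)) ^ (μ : ℂ) / ((x + (β : ℂ)) ^ (μ : ℂ) + (α : ℂ))) lam /
      ((fun x : ℂ => x * (x + (β : ℂ)) ^ (μ : ℂ) / ((x + (β : ℂ)) ^ (μ : ℂ) + (α : ℂ))) lam) =
      1 + (α : ℂ) * (μ : ℂ) * lam / (w * (w ^ (μ : ℂ) + (α : ℂ))) := by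
    rw [hderiv]
    simp only [← hwdef]
    rw [hsub]
    field_simp
    ring
  rw [hkey]
  constructor
  · have habs1 : ‖1 + (α : ℂ) * (μ : ℂ) * lam / (w * (w ^ (μ : ℂ) + (α : ℂ)))‖ ≤
        1 + ‖(α : ℂ) * (μ : ℂ) * lam / (w * (w ^ (μ : ℂ) + (α : ℂ)))‖ := by
      calc ‖(1 : ℂ) + _‖ ≤ ‖(1 : ℂ)‖ + ‖_‖ := norm_add_le _ _
        _ = 1 + _ := by rw [norm_one]
    have hlamw : ‖lam‖ ≤ ‖w‖ := by
      rw [Complex.norm_def, Complex.norm_def]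
      apply Real.sqrt_le_sqrt
      simp only [Complex.normSq_apply, hwdef, Complex.add_re, Complex.add_im,
        Complex.ofReal_re, Complex.ofReal_im, add_zero]
      nlinarith
    have habs2 : ‖(α : ℂ) * (μ : ℂ) * lam / (w * (w ^ (μ : ℂ) + (α : ℂ)))‖ =
        |α| * μ * ‖lam‖ / (‖w‖ * ‖w ^ (μ : ℂ) + (α : ℂ)‖) := by
      simp [norm_div, norm_mul, Complex.norm_real, abs_of_pos hμ0]
    have hwpos : 0 < ‖w‖ := norm_pos_iff.mpr hwne
    have hbound : |α| * μ * ‖lam‖ /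
        (‖w‖ * ‖w ^ (μ : ℂ) + (α : ℂ)‖) ≤ μ * |α| / (α + β ^ μ) := by
      have hdpos : 0 < ‖w ^ (μ : ℂ) + (α : ℂ)‖ := lt_of_lt_of_le hαpos hden
      rw [div_le_div_iff₀ (mul_pos hwpos hdpos) hαpos]
      have h5 : 0 ≤ ‖lam‖ := norm_nonneg _
      have h6 : 0 ≤ |α| := abs_nonneg _
      have h7 : ‖lam‖ * (α + β ^ μ) ≤
          ‖w‖ * ‖w ^ (μ : ℂ) + (α : ℂ)‖ :=
        mul_le_mul hlamw hden hαpos.le (norm_nonneg w)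
      nlinarith [mul_le_mul_of_nonneg_left h7 (mul_nonneg h6 hμ0.le)]
    calc ‖1 + (α : ℂ) * (μ : ℂ) * lam / (w * (w ^ (μ : ℂ) + (α : ℂ)))‖
        ≤ 1 + ‖(α : ℂ) * (μ : ℂ) * lam / (w * (w ^ (μ : ℂ) + (α : ℂ)))‖ := habs1
      _ = 1 + |α| * μ * ‖lam‖ / (‖w‖ * ‖w ^ (μ : ℂ) + (α : ℂ)‖) := by
          rw [habs2]
      _ ≤ 1 + μ * |α| / (α + β ^ μ) := by linarith
  · have : μ * |α| / (α + β ^ μ) ≤ μ := by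
      rw [div_le_iff₀ hαpos]
      nlinarith
    linarith
end

section
/- Let α > 0, β ≥ 0, 0 < μ ≤ 1 and h(λ) = λ(λ+β)^μ/((λ+β)^μ + α) for Re(λ) > 0. Then |arg(h(λ))| ≤ (1+μ)|arg(λ)| for all λ with Re(λ) > 0. In particular h maps the open right half-plane into the sector {z : |arg z| < (1+μ)π/2}. -/
open Real

lemma aux_arg_cpow (z : ℂ) (hz : 0 < z.re) {μ : ℝ} (hμ0 : 0 < μ) (hμ1 : μ ≤ 1) :
    (z ^ (μ : ℂ)).arg = μ * z.arg := by
  have hz0 : z ≠ 0 := by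
    intro h; rw [h] at hz; simp at hz
  have ha : |z.arg| < π / 2 := Complex.abs_arg_lt_pi_div_two_iff.2 (Or.inl hz)
  have hpi : 0 < π := Real.pi_pos
  have harg : |μ * z.arg| < π / 2 := by
    rw [abs_mul, abs_of_pos hμ0]
    calc μ * |z.arg| ≤ 1 * |z.arg| := by
          apply mul_le_mul_of_nonneg_right hμ1 (abs_nonneg _)
      _ < π / 2 := by rwa [one_mul]
  have hmem : μ * z.arg ∈ Set.Ioc (-π) π := by
    constructor
    · nlinarith [abs_lt.1 harg]
    · nlinarith [abs_lt.1 harg]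
  have h1 : Complex.log z * (μ : ℂ) =
      (((Complex.log z).re * μ : ℝ) : ℂ) + ((μ * z.arg : ℝ) : ℂ) * Complex.I := by
    apply Complex.ext <;> simp [Complex.log_im, mul_comm]
  rw [Complex.cpow_def_of_ne_zero hz0, h1, Complex.exp_add, ← Complex.ofReal_exp,
    Complex.arg_real_mul _ (Real.exp_pos _), Complex.exp_mul_I]
  exact Complex.arg_cos_add_sin_mul_I hmem

lemma aux_arg_add (z : ℂ) (hz : 0 < z.re) (a : ℝ) (ha : 0 ≤ a) :
    |(z + (a : ℂ)).arg| ≤ |z.arg| ∧ |z.arg - (z + (a : ℂ)).arg| ≤ |z.arg| := by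
  have hre : 0 < (z + (a : ℂ)).re := by
    simp only [Complex.add_re, Complex.ofReal_re]; linarith
  have him : (z + (a : ℂ)).im = z.im := by simp
  have hc : z.arg = Real.arcsin (z.im / ‖z‖) := Complex.arg_of_re_nonneg hz.le
  have hd : (z + (a : ℂ)).arg = Real.arcsin (z.im / ‖z + (a : ℂ)‖) := by
    rw [Complex.arg_of_re_nonneg hre.le, him]
  have habs : ‖z‖ ≤ ‖z + (a : ℂ)‖ := by
    rw [Complex.norm_def, Complex.norm_def]
    apply Real.sqrt_le_sqrt
    rw [Complex.normSq_apply, Complex.normSq_apply, him]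
    simp only [Complex.add_re, Complex.ofReal_re]
    nlinarith
  have hzpos : 0 < ‖z‖ := by
    apply norm_pos_iff.2
    intro h; rw [h] at hz; simp at hz
  have hzapos : 0 < ‖z + (a : ℂ)‖ := lt_of_lt_of_le hzpos habs
  rcases le_or_gt 0 z.im with him0 | him0
  · have hd0 : 0 ≤ (z + (a : ℂ)).arg := by
      rw [hd]; exact Real.arcsin_nonneg.2 (div_nonneg him0 hzapos.le)
    have hdc : (z + (a : ℂ)).arg ≤ z.arg := by
      rw [hc, hd]
      apply Real.monotone_arcsin
      apply div_le_div_of_nonneg_left him0 hzpos habs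
    constructor
    · rw [abs_of_nonneg hd0, abs_of_nonneg (le_trans hd0 hdc)]; exact hdc
    · rw [abs_of_nonneg (le_trans hd0 hdc)]
      rw [abs_le]; constructor <;> linarith
  · have hd0 : (z + (a : ℂ)).arg ≤ 0 := by
      rw [hd]; exact Real.arcsin_nonpos.2 (div_nonpos_of_nonpos_of_nonneg him0.le hzapos.le)
    have hdc : z.arg ≤ (z + (a : ℂ)).arg := by
      rw [hc, hd]
      apply Real.monotone_arcsin
      rw [div_le_div_iff₀ hzpos hzapos]
      nlinarith
    constructor
    · rw [abs_of_nonpos hd0, abs_of_nonpos (le_trans hdc hd0)]; linarith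
    · rw [abs_of_nonpos (le_trans hdc hd0)]
      rw [abs_le]; constructor <;> linarith

theorem stmt_9 (α β μ : ℝ) (hα : 0 < α) (hβ : 0 ≤ β) (hμ0 : 0 < μ) (hμ1 : μ ≤ 1)
    (lam : ℂ) (hlam : 0 < lam.re) :
    |Complex.arg (lam * (lam + (β : ℂ)) ^ (μ : ℂ) / ((lam + (β : ℂ)) ^ (μ : ℂ) + (α : ℂ)))|
      ≤ (1 + μ) * |Complex.arg lam| ∧
    |Complex.arg (lam * (lam + (β : ℂ)) ^ (μ : ℂ) / ((lam + (β : ℂ)) ^ (μ : ℂ) + (α : ℂ)))|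
      < (1 + μ) * (π / 2) := by
  have hpi : 0 < π := Real.pi_pos
  have hlam0 : lam ≠ 0 := by intro h; rw [h] at hlam; simp at hlam
  have ha : |lam.arg| < π / 2 := Complex.abs_arg_lt_pi_div_two_iff.2 (Or.inl hlam)
  have hlbre : 0 < (lam + (β : ℂ)).re := by
    simp only [Complex.add_re, Complex.ofReal_re]; linarith
  have hlb0 : lam + (β : ℂ) ≠ 0 := by intro h; rw [h] at hlbre; simp at hlbre
  set w : ℂ := (lam + (β : ℂ)) ^ (μ : ℂ) with hw
  have hargw : w.arg = μ * (lam + (β : ℂ)).arg := aux_arg_cpow _ hlbre hμ0 hμ1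
  have hb := aux_arg_add lam hlam β hβ
  have hbb : |(lam + (β : ℂ)).arg| ≤ |lam.arg| := hb.1
  have habw : |w.arg| ≤ μ * |lam.arg| := by
    rw [hargw, abs_mul, abs_of_pos hμ0]
    exact mul_le_mul_of_nonneg_left hbb hμ0.le
  have habw2 : |w.arg| < π / 2 := by
    calc |w.arg| ≤ μ * |lam.arg| := habw
      _ ≤ 1 * |lam.arg| := mul_le_mul_of_nonneg_right hμ1 (abs_nonneg _)
      _ < π / 2 := by rwa [one_mul]
  have hw0 : w ≠ 0 := by
    rw [hw]
    simp only [ne_eq, Complex.cpow_eq_zero_iff, not_and_or, not_not]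
    left; exact hlb0
  have hwre : 0 < w.re := by
    rcases Complex.abs_arg_lt_pi_div_two_iff.1 habw2 with h | h
    · exact h
    · exact absurd h hw0
  have hwa := aux_arg_add w hwre α hα.le
  have hware : 0 < (w + (α : ℂ)).re := by
    simp only [Complex.add_re, Complex.ofReal_re]; linarith
  have hwa0 : w + (α : ℂ) ≠ 0 := by intro h; rw [h] at hware; simp at hware
  have hwaarg : |(w + (α : ℂ)).arg| < π / 2 := Complex.abs_arg_lt_pi_div_two_iff.2 (Or.inl hware)
  -- arg (lam * w) = lam.arg + w.arg
  have harglw : (lam * w).arg = lam.arg + w.arg := by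
    apply Complex.arg_mul hlam0 hw0
    constructor
    · have := abs_lt.1 ha; have := abs_lt.1 habw2; linarith
    · have := abs_lt.1 ha; have := abs_lt.1 habw2; linarith
  have hlw0 : lam * w ≠ 0 := mul_ne_zero hlam0 hw0
  have hinvarg : (w + (α : ℂ))⁻¹.arg = -(w + (α : ℂ)).arg := by
    rw [Complex.arg_inv]
    rw [if_neg]
    intro h
    rw [h] at hwaarg
    rw [abs_of_pos hpi] at hwaarg
    linarith
  have hfinal : (lam * w / (w + (α : ℂ))).arg = lam.arg + w.arg - (w + (α : ℂ)).arg := by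
    rw [div_eq_mul_inv]
    have : (lam * w * (w + (α : ℂ))⁻¹).arg = (lam * w).arg + (w + (α : ℂ))⁻¹.arg := by
      apply Complex.arg_mul hlw0 (inv_ne_zero hwa0)
      rw [harglw, hinvarg]
      have h1 := abs_lt.1 ha
      have h2 := abs_lt.1 habw2
      have h4 := abs_le.1 hwa.2
      have h5 := neg_abs_le lam.arg
      have h6 := le_abs_self lam.arg
      constructor <;> linarith
    rw [this, harglw, hinvarg]
    ring
  rw [hfinal]
  have hkey : |lam.arg + w.arg - (w + (α : ℂ)).arg| ≤ (1 + μ) * |lam.arg| := by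
    have h1 : |lam.arg + w.arg - (w + (α : ℂ)).arg| ≤ |lam.arg| + |w.arg - (w + (α : ℂ)).arg| := by
      have := abs_add_le lam.arg (w.arg - (w + (α : ℂ)).arg)
      calc |lam.arg + w.arg - (w + (α : ℂ)).arg|
          = |lam.arg + (w.arg - (w + (α : ℂ)).arg)| := by ring_nf
        _ ≤ |lam.arg| + |w.arg - (w + (α : ℂ)).arg| := abs_add_le _ _
    have h2 : |w.arg - (w + (α : ℂ)).arg| ≤ |w.arg| := hwa.2
    calc |lam.arg + w.arg - (w + (α : ℂ)).arg|
        ≤ |lam.arg| + |w.arg| := by linarith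
      _ ≤ |lam.arg| + μ * |lam.arg| := by linarith
      _ = (1 + μ) * |lam.arg| := by ring
  constructor
  · exact hkey
  · calc |lam.arg + w.arg - (w + (α : ℂ)).arg| ≤ (1 + μ) * |lam.arg| := hkey
      _ < (1 + μ) * (π / 2) := by
        apply mul_lt_mul_of_pos_left ha
        linarith
end

section
/- Let ρ < 0, β ≥ 0, α ∈ ℝ with D := (ρ+β)² + 4αρ > 0, and set λ₁ = (ρ+β+√D)/2, λ₂ = (ρ+β-√D)/2. Then the function S(t) = ((ρ+β+√D)/(2√D)) e^{((ρ-β+√D)/2)t} - ((ρ+β-√D)/(2√D)) e^{((ρ-β-√D)/2)t} satisfies the integro-differential equation u'(t) = ρ u(t) + ρα ∫₀ᵗ e^{-β(t-s)} u(s) ds for all t > 0, with u(0) = 1. -/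
open Real intervalIntegral

theorem stmt_13 (ρ β α : ℝ) (hρ : ρ < 0) (hβ : 0 ≤ β)
    (hD : 0 < (ρ + β) ^ 2 + 4 * α * ρ)
    (S : ℝ → ℝ)
    (hS : ∀ t : ℝ, S t =
      ((ρ + β + Real.sqrt ((ρ + β) ^ 2 + 4 * α * ρ)) / (2 * Real.sqrt ((ρ + β) ^ 2 + 4 * α * ρ))) *
        Real.exp (((ρ - β + Real.sqrt ((ρ + β) ^ 2 + 4 * α * ρ)) / 2) * t)
      - ((ρ + β - Real.sqrt ((ρ + β) ^ 2 + 4 * α * ρ)) / (2 * Real.sqrt ((ρ + β) ^ 2 + 4 * α * ρ))) *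
        Real.exp (((ρ - β - Real.sqrt ((ρ + β) ^ 2 + 4 * α * ρ)) / 2) * t)) :
    (∀ t : ℝ, 0 < t →
      HasDerivAt S (ρ * S t + ρ * α * ∫ s in (0 : ℝ)..t, Real.exp (-β * (t - s)) * S s) t) ∧
    S 0 = 1 := by
  set d := Real.sqrt ((ρ + β) ^ 2 + 4 * α * ρ) with hddef
  have hd0 : 0 < d := Real.sqrt_pos.mpr hD
  have hd2 : d ^ 2 = (ρ + β) ^ 2 + 4 * α * ρ := Real.sq_sqrt hD.le
  constructor
  · intro t ht
    -- explicit derivative of S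
    have hder : HasDerivAt S
        (((ρ + β + d) / (2 * d)) * (Real.exp (((ρ - β + d) / 2) * t) * (((ρ - β + d) / 2) * 1))
          - ((ρ + β - d) / (2 * d)) * (Real.exp (((ρ - β - d) / 2) * t) * (((ρ - β - d) / 2) * 1))) t := by
      have : S = fun t => ((ρ + β + d) / (2 * d)) * Real.exp (((ρ - β + d) / 2) * t)
          - ((ρ + β - d) / (2 * d)) * Real.exp (((ρ - β - d) / 2) * t) := funext hS
      rw [this]
      exact ((((hasDerivAt_id t).const_mul ((ρ - β + d) / 2)).exp.const_mul _).sub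
        (((hasDerivAt_id t).const_mul ((ρ - β - d) / 2)).exp.const_mul _))
    -- antiderivative for the convolution integral
    have hH : ∀ s : ℝ, HasDerivAt
        (fun s => (Real.exp (((ρ + β + d) / 2) * s) - Real.exp (((ρ + β - d) / 2) * s)) / d)
        (Real.exp (β * s) * S s) s := by
      intro s
      have h1 : HasDerivAt
          (fun s => (Real.exp (((ρ + β + d) / 2) * s) - Real.exp (((ρ + β - d) / 2) * s)) / d)
          ((Real.exp (((ρ + β + d) / 2) * s) * (((ρ + β + d) / 2) * 1)
            - Real.exp (((ρ + β - d) / 2) * s) * (((ρ + β - d) / 2) * 1)) / d) s :=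
        ((((hasDerivAt_id s).const_mul ((ρ + β + d) / 2)).exp.sub
          (((hasDerivAt_id s).const_mul ((ρ + β - d) / 2)).exp)).div_const d)
      convert h1 using 1
      have e1 : Real.exp (β * s) * Real.exp (((ρ - β + d) / 2) * s)
          = Real.exp (((ρ + β + d) / 2) * s) := by rw [← Real.exp_add]; congr 1; ring
      have e2 : Real.exp (β * s) * Real.exp (((ρ - β - d) / 2) * s)
          = Real.exp (((ρ + β - d) / 2) * s) := by rw [← Real.exp_add]; congr 1; ring
      rw [hS s, ← e1, ← e2]
      field_simp
    have hcont : Continuous S := by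
      have : S = fun t => ((ρ + β + d) / (2 * d)) * Real.exp (((ρ - β + d) / 2) * t)
          - ((ρ + β - d) / (2 * d)) * Real.exp (((ρ - β - d) / 2) * t) := funext hS
      rw [this]; fun_prop
    have hint : (∫ s in (0:ℝ)..t, Real.exp (-β * (t - s)) * S s)
        = Real.exp (-(β * t)) *
          ((Real.exp (((ρ + β + d) / 2) * t) - Real.exp (((ρ + β - d) / 2) * t)) / d) := by
      have hrw : ∀ s, Real.exp (-β * (t - s)) * S s
          = Real.exp (-(β * t)) * (Real.exp (β * s) * S s) := by
        intro s
        rw [← mul_assoc, ← Real.exp_add]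
        congr 2
        ring
      simp_rw [hrw]
      rw [intervalIntegral.integral_const_mul]
      rw [intervalIntegral.integral_eq_sub_of_hasDerivAt (fun s _ => hH s)
        (((Real.continuous_exp.comp (continuous_const.mul continuous_id)).mul
          hcont).intervalIntegrable 0 t)]
      norm_num
    rw [hint, hS t]
    convert hder using 1
    have e1 : Real.exp (-(β * t)) * Real.exp (((ρ + β + d) / 2) * t)
        = Real.exp (((ρ - β + d) / 2) * t) := by rw [← Real.exp_add]; congr 1; ring
    have e2 : Real.exp (-(β * t)) * Real.exp (((ρ + β - d) / 2) * t)
        = Real.exp (((ρ - β - d) / 2) * t) := by rw [← Real.exp_add]; congr 1; ring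
    have expand : Real.exp (-(β * t)) *
        ((Real.exp (((ρ + β + d) / 2) * t) - Real.exp (((ρ + β - d) / 2) * t)) / d)
        = (Real.exp (-(β * t)) * Real.exp (((ρ + β + d) / 2) * t)
          - Real.exp (-(β * t)) * Real.exp (((ρ + β - d) / 2) * t)) / d := by ring
    rw [expand, e1, e2]
    have key1 : ((ρ + β + d) / (2 * d)) * ((ρ - β + d) / 2)
        = ρ * ((ρ + β + d) / (2 * d)) + ρ * α / d := by
      field_simp
      linear_combination hd2
    have key2 : ((ρ + β - d) / (2 * d)) * ((ρ - β - d) / 2)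
        = ρ * ((ρ + β - d) / (2 * d)) + ρ * α / d := by
      field_simp
      linear_combination hd2
    linear_combination Real.exp (((ρ - β + d) / 2) * t) * key1
      - Real.exp (((ρ - β - d) / 2) * t) * key2
      - (Real.exp (((ρ - β + d) / 2) * t) - Real.exp (((ρ - β - d) / 2) * t)) * d⁻¹ / 2 * hd2
  · rw [hS 0]
    norm_num
    field_simp
    ring
end

section
/- Let ρ < 0, β ≥ 0, α ∈ ℝ with (ρ+β)² + 4αρ = 0. Then the function S(t) = (1 + ((ρ+β)/2)t) e^{((ρ-β)/2)t} satisfies u'(t) = ρ u(t) + ρα ∫₀ᵗ e^{-β(t-s)} u(s) ds for all t > 0, with u(0) = 1. -/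
open Real intervalIntegral

theorem stmt_14 (ρ β α : ℝ) (hρ : ρ < 0) (hβ : 0 ≤ β)
    (hD : (ρ + β) ^ 2 + 4 * α * ρ = 0)
    (S : ℝ → ℝ)
    (hS : ∀ t : ℝ, S t = (1 + ((ρ + β) / 2) * t) * Real.exp (((ρ - β) / 2) * t)) :
    (∀ t : ℝ, 0 < t →
      HasDerivAt S (ρ * S t + ρ * α * ∫ s in (0 : ℝ)..t, Real.exp (-β * (t - s)) * S s) t) ∧
    S 0 = 1 := by
  have hSfun : S = fun t => (1 + ((ρ + β) / 2) * t) * Real.exp (((ρ - β) / 2) * t) :=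
    funext hS
  subst hSfun
  refine ⟨?_, by simp⟩
  intro t ht
  set c : ℝ := (ρ + β) / 2 with hc
  set d : ℝ := (ρ - β) / 2 with hd
  have hint : (∫ s in (0:ℝ)..t, Real.exp (-β * (t - s)) * ((1 + c * s) * Real.exp (d * s)))
      = t * Real.exp (d * t) := by
    have key : ∀ s ∈ Set.uIcc (0:ℝ) t,
        HasDerivAt (fun s => Real.exp (-β * t) * (s * Real.exp (c * s)))
          (Real.exp (-β * (t - s)) * ((1 + c * s) * Real.exp (d * s))) s := by
      intro s _
      have h1 : HasDerivAt (fun s : ℝ => s * Real.exp (c * s))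
          (1 * Real.exp (c * s) + s * (Real.exp (c * s) * c)) s :=
        by simpa using (hasDerivAt_id s).fun_mul (((hasDerivAt_id s).const_mul c).exp)
      have h2 : HasDerivAt (fun s => Real.exp (-β * t) * (s * Real.exp (c * s)))
          (Real.exp (-β * t) * (1 * Real.exp (c * s) + s * (Real.exp (c * s) * c))) s :=
        h1.const_mul (Real.exp (-β * t))
      convert h2 using 1
      have he : Real.exp (-β * (t - s)) * Real.exp (d * s)
          = Real.exp (-β * t) * Real.exp (c * s) := by
        rw [← Real.exp_add, ← Real.exp_add]
        congr 1
        rw [hc, hd]; ring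
      calc Real.exp (-β * (t - s)) * ((1 + c * s) * Real.exp (d * s))
          = (1 + c * s) * (Real.exp (-β * (t - s)) * Real.exp (d * s)) := by ring
        _ = (1 + c * s) * (Real.exp (-β * t) * Real.exp (c * s)) := by rw [he]
        _ = Real.exp (-β * t) * (1 * Real.exp (c * s) + s * (Real.exp (c * s) * c)) := by ring
    have hcont : IntervalIntegrable
        (fun s => Real.exp (-β * (t - s)) * ((1 + c * s) * Real.exp (d * s)))
        MeasureTheory.volume 0 t := by
      apply Continuous.intervalIntegrable
      continuity
    rw [intervalIntegral.integral_eq_sub_of_hasDerivAt key hcont]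
    have he2 : Real.exp (-β * t) * Real.exp (c * t) = Real.exp (d * t) := by
      rw [← Real.exp_add]; congr 1; rw [hc, hd]; ring
    calc Real.exp (-β * t) * (t * Real.exp (c * t)) - Real.exp (-β * t) * (0 * Real.exp (c * 0))
        = t * (Real.exp (-β * t) * Real.exp (c * t)) := by ring
      _ = t * Real.exp (d * t) := by rw [he2]
  rw [hint]
  have h1 : HasDerivAt (fun t : ℝ => (1 + c * t) * Real.exp (d * t))
      (c * Real.exp (d * t) + (1 + c * t) * (Real.exp (d * t) * d)) t :=
    by simpa using ((((hasDerivAt_id t).const_mul c).const_add 1).fun_mul (((hasDerivAt_id t).const_mul d).exp))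
  convert h1 using 1
  simp only [hc, hd]
  linear_combination (t * Real.exp ((ρ - β) / 2 * t) / 4) * hD
end

section
/- Let α > 0, β ≥ 0, 0 < μ ≤ 1. For every λ ∈ ℂ with Re(λ) > 0, the value h(λ) = λ(λ+β)^μ/((λ+β)^μ + α) is nonzero and lies in the closed sector {z ≠ 0 : |arg z| ≤ (1+μ)|arg λ|} ⊆ {z : |arg z| < (1+μ)π/2}. -/
open Real

private lemma arg_eq_arctan' {z : ℂ} (hz : 0 < z.re) :
    Complex.arg z = Real.arctan (z.im / z.re) := by
  have h := Complex.abs_arg_lt_pi_div_two_iff.mpr (Or.inl hz)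
  rw [abs_lt] at h
  rw [← Complex.tan_arg z, Real.arctan_tan (by linarith [h.1]) h.2]

private lemma arg_add_real_mem {z : ℂ} (hz : 0 < z.re) {t : ℝ} (ht : 0 ≤ t) :
    Complex.arg (z + (t : ℂ)) ∈ Set.uIcc 0 z.arg := by
  have hz' : 0 < (z + (t : ℂ)).re := by
    simp only [Complex.add_re, Complex.ofReal_re]; linarith
  rw [arg_eq_arctan' hz, arg_eq_arctan' hz', Complex.add_re, Complex.add_im,
    Complex.ofReal_re, Complex.ofReal_im, add_zero]
  have hre : 0 < z.re + t := by linarith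
  rcases le_or_gt 0 z.im with him | him
  · have h1 : (0:ℝ) ≤ Real.arctan (z.im / z.re) := by
      rw [← Real.arctan_zero]
      exact Real.arctan_strictMono.monotone (by positivity)
    rw [Set.uIcc_of_le h1]
    refine ⟨?_, Real.arctan_strictMono.monotone ?_⟩
    · rw [← Real.arctan_zero]
      exact Real.arctan_strictMono.monotone (by positivity)
    · rw [div_le_div_iff₀ hre hz]; nlinarith
  · have h1 : Real.arctan (z.im / z.re) ≤ 0 := by
      rw [← Real.arctan_zero]
      refine Real.arctan_strictMono.monotone ?_
      exact div_nonpos_of_nonpos_of_nonneg him.le hz.le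
    rw [Set.uIcc_of_ge h1]
    refine ⟨Real.arctan_strictMono.monotone ?_, ?_⟩
    · rw [div_le_div_iff₀ hz hre]; nlinarith
    · rw [← Real.arctan_zero]
      refine Real.arctan_strictMono.monotone ?_
      exact div_nonpos_of_nonpos_of_nonneg him.le hre.le


private lemma abs_of_mem_uIcc {x y : ℝ} (h : x ∈ Set.uIcc 0 y) : |x| ≤ |y| := by
  rw [Set.mem_uIcc] at h
  rcases h with h | h <;> rw [abs_le] <;>
    constructor <;> linarith [neg_abs_le y, le_abs_self y, h.1, h.2]

private lemma abs_sub_of_mem_uIcc {c d : ℝ} (h : c ∈ Set.uIcc 0 d) : |d - c| ≤ |d| := by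
  rw [Set.mem_uIcc] at h
  rcases h with h | h <;> rw [abs_le] <;>
    constructor <;> linarith [neg_abs_le d, le_abs_self d, h.1, h.2]

theorem stmt_19 (α β μ : ℝ) (hα : 0 < α) (hβ : 0 ≤ β) (hμ0 : 0 < μ) (hμ1 : μ ≤ 1)
    (lam : ℂ) (hlam : 0 < lam.re) :
    lam * (lam + (β : ℂ)) ^ (μ : ℂ) / ((lam + (β : ℂ)) ^ (μ : ℂ) + (α : ℂ)) ≠ 0 ∧
    |Complex.arg (lam * (lam + (β : ℂ)) ^ (μ : ℂ) / ((lam + (β : ℂ)) ^ (μ : ℂ) + (α : ℂ)))|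
      ≤ (1 + μ) * |Complex.arg lam| ∧
    (1 + μ) * |Complex.arg lam| < (1 + μ) * (π / 2) := by
  have hpi := Real.pi_pos
  set s : ℂ := lam + (β : ℂ) with hsdef
  have hsre : 0 < s.re := by
    simp only [hsdef, Complex.add_re, Complex.ofReal_re]; linarith
  have hs0 : s ≠ 0 := fun h => by rw [h] at hsre; simp at hsre
  have hlam0 : lam ≠ 0 := fun h => by rw [h] at hlam; simp at hlam
  set a := Complex.arg lam with hadef
  set b := Complex.arg s with hbdef
  have hb : b ∈ Set.uIcc 0 a := arg_add_real_mem hlam hβ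
  have ha2 : |a| < π / 2 := Complex.abs_arg_lt_pi_div_two_iff.mpr (Or.inl hlam)
  have hba : |b| ≤ |a| := abs_of_mem_uIcc hb
  set w : ℂ := s ^ (μ : ℂ) with hwdef
  have hw0 : w ≠ 0 := by
    simp only [hwdef, Ne, Complex.cpow_eq_zero_iff, not_and_or, not_not]
    tauto
  have hargw : Complex.arg w = b * μ := by
    rw [hwdef, Complex.cpow_ofReal, Complex.ofReal_cos, Complex.ofReal_sin]
    exact Complex.arg_mul_cos_add_sin_mul_I
      (Real.rpow_pos_of_pos (norm_pos_iff.mpr hs0) μ)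
      ⟨by nlinarith [abs_le.1 hba, abs_lt.1 ha2, abs_nonneg b],
       by nlinarith [abs_le.1 hba, abs_lt.1 ha2, abs_nonneg b]⟩
  have habμ : |b * μ| ≤ |a| * μ := by
    rw [abs_mul, abs_of_pos hμ0]
    exact mul_le_mul_of_nonneg_right hba hμ0.le
  have hbμlt : |b * μ| < π / 2 := by nlinarith [abs_lt.1 ha2, abs_nonneg a]
  have hwre : 0 < w.re := by
    have h := Complex.abs_arg_lt_pi_div_two_iff.mp (by rw [hargw]; exact hbμlt)
    rcases h with h | h
    · exact h
    · exact absurd h hw0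
  have hc : Complex.arg (w + (α : ℂ)) ∈ Set.uIcc 0 (b * μ) := by
    rw [← hargw]; exact arg_add_real_mem hwre hα.le
  have hwa0 : w + (α : ℂ) ≠ 0 := fun h => by
    have h2 : 0 < (w + (α : ℂ)).re := by
      simp only [Complex.add_re, Complex.ofReal_re]; linarith
    rw [h] at h2; simp at h2
  have hcbound : |b * μ - Complex.arg (w + (α : ℂ))| ≤ |a| * μ :=
    (abs_sub_of_mem_uIcc hc).trans habμ
  have hcabs : |Complex.arg (w + (α : ℂ))| ≤ |a| * μ := (abs_of_mem_uIcc hc).trans habμ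
  have hargmul : Complex.arg (lam * w) = a + b * μ := by
    have h := Complex.arg_mul hlam0 hw0 (by
      rw [hargw]
      constructor <;>
        nlinarith [abs_lt.1 ha2, abs_le.1 habμ, le_abs_self (b * μ), neg_abs_le (b * μ),
          abs_nonneg a])
    rw [h, hargw]
  have hcarg : Complex.arg ((w + (α : ℂ))⁻¹) = -Complex.arg (w + (α : ℂ)) := by
    rw [Complex.arg_inv, if_neg]
    intro h
    rw [h, abs_of_pos hpi] at hcabs
    nlinarith [abs_lt.1 ha2, abs_nonneg a]
  have hlw0 : lam * w ≠ 0 := mul_ne_zero hlam0 hw0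
  have hinv0 : (w + (α : ℂ))⁻¹ ≠ 0 := inv_ne_zero hwa0
  have key : (1 + μ) * |a| < (1 + μ) * (π / 2) :=
    mul_lt_mul_of_pos_left ha2 (by linarith)
  have h3 : |a + b * μ - Complex.arg (w + (α : ℂ))| ≤ (1 + μ) * |a| := by
    calc |a + b * μ - Complex.arg (w + (α : ℂ))|
        = |a + (b * μ - Complex.arg (w + (α : ℂ)))| := by ring_nf
      _ ≤ |a| + |b * μ - Complex.arg (w + (α : ℂ))| := abs_add_le _ _
      _ ≤ |a| + |a| * μ := by linarith
      _ = (1 + μ) * |a| := by ring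
  have hfinal : Complex.arg (lam * w / (w + (α : ℂ))) = a + b * μ - Complex.arg (w + (α : ℂ)) := by
    rw [div_eq_mul_inv, Complex.arg_mul hlw0 hinv0 ?_, hargmul, hcarg]
    · ring
    · rw [hargmul, hcarg]
      constructor <;>
        [nlinarith [(abs_le.1 h3).1, hμ1, key, hpi]; nlinarith [(abs_le.1 h3).2, hμ1, key, hpi]]
  exact ⟨div_ne_zero hlw0 hwa0, by rw [hfinal]; exact h3, key⟩
end
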